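/- arXiv:2602.06950 — 6 statements merged into one kernel-verified Lean document; each statement's English description precedes it below -/
import Mathlib

section
/- For every single-elimination tournament T with n players and every scoring system σ, the metric dimension satisfies dim(T,σ) ≤ n − 1. -/
namespace SETour

variable {V : Type*}

/-- `a` is a player, i.e. a source of the digraph. -/
def IsPlayer (adj : V → V → Prop) (a : V) : Prop := ∀ u, ¬ adj u a

/-- `x` is a match, i.e. a non-source vertex. -/
def IsMatch (adj : V → V → Prop) (x : V) : Prop := ¬ IsPlayer adj x

/-- `z` is a sink, i.e. has no out-neighbors. -/
def IsSink (adj : V → V → Prop) (z : V) : Prop := ∀ w, ¬ adj z w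

/-- A single-elimination tournament: exactly one sink, every non-sink vertex has
exactly one out-neighbor (at most one out-neighbor in general), no directed cycles,
and no vertex has exactly one in-neighbor. -/
structure IsSETournament (adj : V → V → Prop) : Prop where
  unique_sink : ∃! z, IsSink adj z
  out_unique : ∀ ⦃v w w'⦄, adj v w → adj v w' → w = w'
  acyclic : ∀ v, ¬ Relation.TransGen adj v v
  in_ne_one : ∀ v, {u | adj u v}.ncard ≠ 1

/-- The set of players of the tournament. -/
def players (adj : V → V → Prop) : Set V := {a | IsPlayer adj a}

/-- The player set `P(u)`: all players having a directed walk to `u`. -/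
def playerSet (adj : V → V → Prop) (u : V) : Set V :=
  {a | IsPlayer adj a ∧ Relation.ReflTransGen adj a u}

/-- A bracket: a function from vertices to players fixing players, in which the
winner of each match is the winner of one of the matches feeding into it. -/
structure IsBracket (adj : V → V → Prop) (B : V → V) : Prop where
  toPlayer : ∀ v, IsPlayer adj (B v)
  player_fix : ∀ a, IsPlayer adj a → B a = a
  match_pred : ∀ x, IsMatch adj x → ∃ u, adj u x ∧ B x = B u

/-- A scoring system: positive reals on matches. -/
def IsScoring (adj : V → V → Prop) (σ : V → ℝ) : Prop :=
  ∀ x, IsMatch adj x → 0 < σ x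

/-- The σ-score of two brackets: the sum of σ over the matches on which they agree. -/
noncomputable def score (adj : V → V → Prop) (σ : V → ℝ) (B B' : V → V) : ℝ :=
  ∑ᶠ x ∈ {x | IsMatch adj x ∧ B x = B' x}, σ x

/-- A set of brackets is σ-resolving if any two distinct brackets are
distinguished by their σ-score against some member of the set. -/
def IsResolving (adj : V → V → Prop) (σ : V → ℝ) (𝓑 : Set (V → V)) : Prop :=
  ∀ B B' : V → V, IsBracket adj B → IsBracket adj B' → B ≠ B' →
    ∃ Bi ∈ 𝓑, score adj σ Bi B ≠ score adj σ Bi B'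

/-- The metric dimension: minimum size of a σ-resolving set of brackets. -/
noncomputable def dimT (adj : V → V → Prop) (σ : V → ℝ) : ℕ :=
  sInf {n | ∃ 𝓑 : Set (V → V), (∀ B ∈ 𝓑, IsBracket adj B) ∧
    IsResolving adj σ 𝓑 ∧ 𝓑.ncard = n}

/-- The resolving number: minimum `r` such that every set of `r` distinct
brackets is σ-resolving. -/
noncomputable def resT (adj : V → V → Prop) (σ : V → ℝ) : ℕ :=
  sInf {r | ∀ 𝓑 : Set (V → V), (∀ B ∈ 𝓑, IsBracket adj B) → 𝓑.ncard = r →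
    IsResolving adj σ 𝓑}

/-- `x` is the match where players `a` and `b` face off: it has in-neighbors
`u_a, u_b` with `P(u_a) ∩ {a,b} = {a}` and `P(u_b) ∩ {a,b} = {b}`. -/
def IsPairMatch (adj : V → V → Prop) (a b x : V) : Prop :=
  ∃ ua ub, adj ua x ∧ adj ub x ∧
    playerSet adj ua ∩ {a, b} = {a} ∧ playerSet adj ub ∩ {a, b} = {b}

open Classical in
/-- The bracket obtained from `B` by making player `a` win every match it can. -/
noncomputable def favBracket (adj : V → V → Prop) (B : V → V) (a : V) : V → V :=
  fun u => if a ∈ playerSet adj u then a else B u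

/-- A scoring system has distinct subset sums if distinct sets of matches have
distinct total scores. -/
def DistinctSubsetSums (adj : V → V → Prop) (σ : V → ℝ) : Prop :=
  ∀ M M' : Set V, (∀ x ∈ M, IsMatch adj x) → (∀ x ∈ M', IsMatch adj x) →
    ∑ᶠ x ∈ M, σ x = ∑ᶠ x ∈ M', σ x → M = M'

/-- The quantity `max_{x ∈ M(T)} (|P(x)| − max_{u ∈ N⁻(x)} |P(u)|)`. -/
noncomputable def lbound (adj : V → V → Prop) : ℕ :=
  sSup {k | ∃ x, IsMatch adj x ∧
    k = (playerSet adj x).ncard - sSup {m | ∃ u, adj u x ∧ m = (playerSet adj u).ncard}}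

/-- The vertex set of the sub-tournament `T_u`: vertices `v` with `P(v) ⊆ P(u)`. -/
def subVert (adj : V → V → Prop) (u : V) : Set V :=
  {v | playerSet adj v ⊆ playerSet adj u}

/-- The adjacency relation of the sub-tournament `T_u`. -/
def subAdj (adj : V → V → Prop) (u : V) : subVert adj u → subVert adj u → Prop :=
  fun v w => adj v.1 w.1

/-- A standard single-elimination tournament: one obtained from a complete
(perfect) binary tree by orienting all edges towards its root.  Equivalently, a
single-elimination tournament in which every match has exactly two in-neighbors
and all players are at the same distance from the sink (witnessed by a depth
function decreasing by 1 along every edge and constant on players). -/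
def IsStandard (adj : V → V → Prop) : Prop :=
  IsSETournament adj ∧
  (∀ x, IsMatch adj x → {u | adj u x}.ncard = 2) ∧
  ∃ (d : V → ℕ) (r : ℕ), (∀ v w, adj v w → d v = d w + 1) ∧
    ∀ a, IsPlayer adj a → d a = r


/-!
Fix a bracket `B₀`, a player `a₀`, and for every other player `a` let `B₀ᵃ` be `B₀` changed
so that `a` wins every match it can reach. Against `B₀ᵃ` a bracket `C` scores the weight of
the matches `C` awards to `a` plus the weight of the matches off `a`'s path on which `C`
agrees with `B₀`. Let `B ≠ B'` disagree on a minimal match `x₀`, won by `α` in `B` and by `β`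
in `B'`. On disagreements, `α` and `β` reach exactly the matches above `x₀`, so the off-path
parts of the rows `α` and `β` change by the same amount from `B` to `B'`, while the win
part of row `α` strictly drops and that of row `β` strictly rises: if `α, β ≠ a₀` one of the
two rows separates `B` and `B'`. Choosing `x₀` off `a₀`'s path whenever some disagreement
lies there, the remaining case has every disagreement above `x₀`, the off-path parts do not
change at all, and the row of whichever finalist is not `a₀` separates `B` and `B'`.
-/

open Relation

variable {adj : V → V → Prop}

namespace IsSETournament

variable (hT : IsSETournament adj)
include hT

theorem reflTransGen_total {a x y : V} (hx : ReflTransGen adj a x) (hy : ReflTransGen adj a y) :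
    ReflTransGen adj x y ∨ ReflTransGen adj y x :=
  ReflTransGen.total_of_right_unique (fun _ _ _ h h' => hT.out_unique h h') hx hy

theorem eq_of_adj_of_adj_of_reflTransGen {u y w : V} (hu : adj u w) (hy : adj y w)
    (huy : ReflTransGen adj u y) : u = y := by
  rcases huy.cases_head with h | ⟨c, huc, hcy⟩
  · exact h
  · rw [hT.out_unique huc hu] at hcy
    exact absurd (TransGen.tail' hcy hy) (hT.acyclic w)

theorem wellFounded_transGen [Finite V] : WellFounded (TransGen adj) :=
  have : Std.Irrefl (TransGen adj) := ⟨hT.acyclic⟩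
  Finite.wellFounded_of_trans_of_irrefl _

theorem reflTransGen_iff_of_minimal {S : Set V} {γ x₀ x : V}
    (hmin : ∀ y ∈ S, ¬ TransGen adj y x₀) (hγ : ReflTransGen adj γ x₀) (hx : x ∈ S) :
    ReflTransGen adj γ x ↔ ReflTransGen adj x₀ x := by
  refine ⟨fun hγx => ?_, hγ.trans⟩
  rcases hT.reflTransGen_total hγ hγx with h | h
  · exact h
  · rcases reflTransGen_iff_eq_or_transGen.mp h with rfl | h
    exacts [ReflTransGen.refl, absurd h (hmin x hx)]

end IsSETournament

namespace IsBracket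

variable [Finite V] {C C' : V → V} (hT : IsSETournament adj) (hC : IsBracket adj C)
include hT hC

theorem reflTransGen_apply (v : V) : ReflTransGen adj (C v) v := by
  induction v using (Subrelation.wf TransGen.single hT.wellFounded_transGen).induction with
  | _ v ih =>
    by_cases hv : IsPlayer adj v
    · rw [hC.player_fix v hv]
    · obtain ⟨u, hu, hCv⟩ := hC.match_pred v hv
      exact hCv ▸ (ih u hu).tail hu

theorem apply_mem_playerSet (v : V) : C v ∈ playerSet adj v :=
  ⟨hC.toPlayer v, hC.reflTransGen_apply hT v⟩

theorem apply_eq_of_adj {α y w : V} (hyw : adj y w) (hαy : ReflTransGen adj α y)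
    (hw : C w = α) : C y = α := by
  obtain ⟨u, huw, hCw⟩ := hC.match_pred w (fun h => h y hyw)
  have hαu : ReflTransGen adj α u := hw ▸ hCw ▸ hC.reflTransGen_apply hT u
  have hu : u = y := by
    rcases hT.reflTransGen_total hαu hαy with h | h
    · exact hT.eq_of_adj_of_adj_of_reflTransGen huw hyw h
    · exact (hT.eq_of_adj_of_adj_of_reflTransGen hyw huw h).symm
  rw [← hu, ← hCw, hw]

theorem apply_eq_of_reflTransGen {α y x : V} (hαy : ReflTransGen adj α y)
    (hyx : ReflTransGen adj y x) (hx : C x = α) : C y = α := by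
  induction hyx using ReflTransGen.head_induction_on with
  | refl => exact hx
  | head hyw _ ih => exact hC.apply_eq_of_adj hT hyw hαy (ih (hαy.tail hyw))

theorem apply_eq_of_apply_eq {α x₀ x : V} (hC' : IsBracket adj C') (hx₀ : C x₀ = α)
    (hx₀' : C' x₀ ≠ α) (hx : C' x = α) : C x = α := by
  have hαx : ReflTransGen adj α x := hx ▸ hC'.reflTransGen_apply hT x
  have hαx₀ : ReflTransGen adj α x₀ := hx₀ ▸ hC.reflTransGen_apply hT x₀
  rcases hT.reflTransGen_total hαx hαx₀ with h | h
  · exact hC.apply_eq_of_reflTransGen hT hαx h hx₀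
  · exact absurd (hC'.apply_eq_of_reflTransGen hT hαx₀ h hx) hx₀'

end IsBracket

theorem IsBracket.ext {B B' : V → V} (hB : IsBracket adj B) (hB' : IsBracket adj B')
    (h : ∀ x, IsMatch adj x → B x = B' x) : B = B' := by
  funext v
  by_cases hv : IsPlayer adj v
  · rw [hB.player_fix v hv, hB'.player_fix v hv]
  · exact h v hv

theorem isBracket_favBracket {B₀ : V → V} (hB₀ : IsBracket adj B₀) {a : V} (ha : IsPlayer adj a) :
    IsBracket adj (favBracket adj B₀ a) := by
  refine ⟨fun v => ?_, fun v hv => ?_, fun x hx => ?_⟩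
  · by_cases h : a ∈ playerSet adj v
    · simpa [favBracket, h] using ha
    · simpa [favBracket, h] using hB₀.toPlayer v
  · by_cases h : a ∈ playerSet adj v
    · rcases h.2.cases_tail with rfl | ⟨c, -, hc⟩
      · simp [favBracket, h]
      · exact absurd hc (hv c)
    · simp [favBracket, h, hB₀.player_fix v hv]
  · by_cases h : a ∈ playerSet adj x
    · rcases h.2.cases_tail with rfl | ⟨u, hau, hux⟩
      · exact absurd ha hx
      · have hu : a ∈ playerSet adj u := ⟨ha, hau⟩
        exact ⟨u, hux, by simp [favBracket, h, hu]⟩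
    · obtain ⟨u, hux, hB₀x⟩ := hB₀.match_pred x hx
      have hu : a ∉ playerSet adj u := fun hu => h ⟨hu.1, hu.2.tail hux⟩
      exact ⟨u, hux, by simp [favBracket, h, hu, hB₀x]⟩

def disagreements (adj : V → V → Prop) (B B' : V → V) : Set V :=
  {x | IsMatch adj x ∧ B x ≠ B' x}

theorem exists_minimal_disagreement [Finite V] (hT : IsSETournament adj) {B B' : V → V}
    (hB : IsBracket adj B) (hB' : IsBracket adj B') (hne : B ≠ B') (a₀ : V) :
    ∃ x₀ ∈ disagreements adj B B', (∀ x ∈ disagreements adj B B', ¬ TransGen adj x x₀) ∧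
      (¬ ReflTransGen adj a₀ x₀ ∨ ∀ x ∈ disagreements adj B B', ReflTransGen adj x₀ x) := by
  have hD : (disagreements adj B B').Nonempty := by
    by_contra hD
    exact hne (hB.ext hB' fun x hx => by_contra fun hd => hD ⟨x, hx, hd⟩)
  by_cases hoff : ∃ x ∈ disagreements adj B B', ¬ ReflTransGen adj a₀ x
  · obtain ⟨x, hx, ha₀x⟩ := hoff
    obtain ⟨x₀, ⟨hx₀, ha₀x₀⟩, hmin⟩ := hT.wellFounded_transGen.has_min
      {x | x ∈ disagreements adj B B' ∧ ¬ ReflTransGen adj a₀ x} ⟨x, hx, ha₀x⟩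
    refine ⟨x₀, hx₀, fun y hy hyx₀ => ?_, Or.inl ha₀x₀⟩
    exact hmin y ⟨hy, fun h => ha₀x₀ (h.trans hyx₀.to_reflTransGen)⟩ hyx₀
  · push Not at hoff
    obtain ⟨x₀, hx₀, hmin⟩ := hT.wellFounded_transGen.has_min _ hD
    exact ⟨x₀, hx₀, hmin, Or.inr fun x hx =>
      (hT.reflTransGen_iff_of_minimal hmin (hoff x₀ hx₀) hx).mp (hoff x hx)⟩

section Scores

open Classical

variable [Fintype V] (adj) (σ : V → ℝ)

theorem score_eq_sum (A C : V → V) :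
    score adj σ A C = ∑ x, if IsMatch adj x ∧ A x = C x then σ x else 0 := by
  rw [score, ← Finset.sum_filter, ← finsum_mem_coe_finset, Finset.coe_filter_univ]

noncomputable def winWeight (C : V → V) (a : V) : ℝ :=
  ∑ x, if IsMatch adj x ∧ C x = a then σ x else 0

noncomputable def offPathWeight (B₀ C : V → V) (a : V) : ℝ :=
  ∑ x, if IsMatch adj x ∧ a ∉ playerSet adj x ∧ B₀ x = C x then σ x else 0

variable {adj σ}

theorem score_favBracket (hT : IsSETournament adj) {C : V → V} (hC : IsBracket adj C)
    (B₀ : V → V) (a : V) :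
    score adj σ (favBracket adj B₀ a) C = winWeight adj σ C a + offPathWeight adj σ B₀ C a := by
  rw [score_eq_sum, winWeight, offPathWeight, ← Finset.sum_add_distrib]
  refine Finset.sum_congr rfl fun x _ => ?_
  by_cases ha : a ∈ playerSet adj x
  · by_cases hCx : C x = a
    · simp [favBracket, ha, hCx]
    · simp [favBracket, ha, hCx, Ne.symm hCx]
  · have hCx : C x ≠ a := fun h => ha (h ▸ hC.apply_mem_playerSet hT x)
    simp [favBracket, ha, hCx]

theorem winWeight_lt_winWeight (hT : IsSETournament adj) (hσ : IsScoring adj σ)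
    {C C' : V → V} (hC : IsBracket adj C) (hC' : IsBracket adj C') {α x₀ : V}
    (hx₀ : IsMatch adj x₀) (hCx₀ : C x₀ = α) (hC'x₀ : C' x₀ ≠ α) :
    winWeight adj σ C' α < winWeight adj σ C α := by
  refine Finset.sum_lt_sum (fun x _ => ?_) ⟨x₀, Finset.mem_univ _, ?_⟩
  · by_cases hx : IsMatch adj x ∧ C' x = α
    · rw [if_pos hx, if_pos ⟨hx.1, hC.apply_eq_of_apply_eq hT hC' hCx₀ hC'x₀ hx.2⟩]
    · rw [if_neg hx]
      split_ifs with h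
      exacts [(hσ x h.1).le, le_rfl]
  · simpa [hx₀, hCx₀, hC'x₀] using hσ x₀ hx₀

theorem offPathWeight_eq_of_forall_mem {B₀ B B' : V → V} {a : V}
    (h : ∀ x ∈ disagreements adj B B', a ∈ playerSet adj x) :
    offPathWeight adj σ B₀ B a = offPathWeight adj σ B₀ B' a := by
  refine Finset.sum_congr rfl fun x _ => ?_
  by_cases hx : x ∈ disagreements adj B B'
  · simp [h x hx]
  · by_cases hm : IsMatch adj x
    · rw [show B x = B' x from not_not.mp fun hd => hx ⟨hm, hd⟩]
    · simp [hm]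

theorem offPathWeight_sub_eq_of_forall_iff {B₀ B B' : V → V} {a b : V}
    (h : ∀ x ∈ disagreements adj B B', (a ∈ playerSet adj x ↔ b ∈ playerSet adj x)) :
    offPathWeight adj σ B₀ B a - offPathWeight adj σ B₀ B' a =
      offPathWeight adj σ B₀ B b - offPathWeight adj σ B₀ B' b := by
  simp only [offPathWeight, ← Finset.sum_sub_distrib]
  refine Finset.sum_congr rfl fun x _ => ?_
  by_cases hx : x ∈ disagreements adj B B'
  · simp [h x hx]
  · by_cases hm : IsMatch adj x
    · rw [show B x = B' x from not_not.mp fun hd => hx ⟨hm, hd⟩]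
      simp
    · simp [hm]

end Scores

theorem eq_of_forall_score_favBracket_eq [Fintype V] (hT : IsSETournament adj) {σ : V → ℝ}
    (hσ : IsScoring adj σ) {B₀ B B' : V → V} {a₀ : V} (hB : IsBracket adj B)
    (hB' : IsBracket adj B')
    (h : ∀ a, IsPlayer adj a → a ≠ a₀ →
      score adj σ (favBracket adj B₀ a) B = score adj σ (favBracket adj B₀ a) B') :
    B = B' := by
  by_contra hne
  obtain ⟨x₀, ⟨hx₀, hBx₀⟩, hmin, hpivot⟩ := exists_minimal_disagreement hT hB hB' hne a₀
  have hα := hB.apply_mem_playerSet hT x₀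
  have hβ := hB'.apply_mem_playerSet hT x₀
  have hwα := winWeight_lt_winWeight (σ := σ) hT hσ hB hB' hx₀ rfl (Ne.symm hBx₀)
  have hwβ := winWeight_lt_winWeight (σ := σ) hT hσ hB' hB hx₀ rfl hBx₀
  have hrow : ∀ a, IsPlayer adj a → a ≠ a₀ → winWeight adj σ B a + offPathWeight adj σ B₀ B a =
      winWeight adj σ B' a + offPathWeight adj σ B₀ B' a := fun a ha ha₀ => by
    simpa only [score_favBracket hT hB, score_favBracket hT hB'] using h a ha ha₀
  rcases hpivot with ha₀ | habove
  · have hoff : offPathWeight adj σ B₀ B (B x₀) - offPathWeight adj σ B₀ B' (B x₀) =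
        offPathWeight adj σ B₀ B (B' x₀) - offPathWeight adj σ B₀ B' (B' x₀) :=
      offPathWeight_sub_eq_of_forall_iff fun x hx =>
        ⟨fun h => ⟨hβ.1, hβ.2.trans ((hT.reflTransGen_iff_of_minimal hmin hα.2 hx).mp h.2)⟩,
          fun h => ⟨hα.1, hα.2.trans ((hT.reflTransGen_iff_of_minimal hmin hβ.2 hx).mp h.2)⟩⟩
    linarith [hrow _ hα.1 fun h => ha₀ (h ▸ hα.2), hrow _ hβ.1 fun h => ha₀ (h ▸ hβ.2)]
  · have hoffα := offPathWeight_eq_of_forall_mem (σ := σ) (B₀ := B₀)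
      fun x hx => (⟨hα.1, hα.2.trans (habove x hx)⟩ : B x₀ ∈ playerSet adj x)
    have hoffβ := offPathWeight_eq_of_forall_mem (σ := σ) (B₀ := B₀)
      fun x hx => (⟨hβ.1, hβ.2.trans (habove x hx)⟩ : B' x₀ ∈ playerSet adj x)
    rcases ne_or_eq (B x₀) a₀ with hαa₀ | hαa₀
    · linarith [hrow _ hα.1 hαa₀]
    · linarith [hrow _ hβ.1 fun h => hBx₀ (hαa₀.trans h.symm)]

theorem isResolving_image_favBracket [Finite V] (hT : IsSETournament adj) {σ : V → ℝ}
    (hσ : IsScoring adj σ) (B₀ : V → V) (a₀ : V) :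
    IsResolving adj σ (favBracket adj B₀ '' (players adj \ {a₀})) := by
  have := Fintype.ofFinite V
  intro B B' hB hB' hne
  by_contra! hscore
  exact hne (eq_of_forall_score_favBracket_eq hT hσ hB hB' fun a ha ha₀ =>
    hscore _ ⟨a, ⟨ha, ha₀⟩, rfl⟩)

theorem dimT_le_ncard {σ : V → ℝ} {𝓑 : Set (V → V)} (h𝓑 : ∀ B ∈ 𝓑, IsBracket adj B)
    (hres : IsResolving adj σ 𝓑) : dimT adj σ ≤ 𝓑.ncard :=
  Nat.sInf_le ⟨𝓑, h𝓑, hres, rfl⟩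

/-- For every single-elimination tournament with `n` players and any
scoring system σ, `dim(T,σ) ≤ n − 1`. -/
theorem statement_1 {V : Type*} [Finite V] (adj : V → V → Prop)
    (hT : IsSETournament adj) (n : ℕ) (hn : (players adj).ncard = n)
    (σ : V → ℝ) (hσ : IsScoring adj σ) :
    dimT adj σ ≤ n - 1 := by
  by_cases hbr : ∃ B₀, IsBracket adj B₀
  · obtain ⟨B₀, hB₀⟩ := hbr
    obtain ⟨z, -⟩ := hT.unique_sink
    have ha₀ : B₀ z ∈ players adj := hB₀.toPlayer z
    calc dimT adj σ ≤ (favBracket adj B₀ '' (players adj \ {B₀ z})).ncard :=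
          dimT_le_ncard (by rintro _ ⟨a, ⟨ha, -⟩, rfl⟩; exact isBracket_favBracket hB₀ ha)
            (isResolving_image_favBracket hT hσ B₀ (B₀ z))
      _ ≤ (players adj \ {B₀ z}).ncard := Set.ncard_image_le (Set.toFinite _)
      _ = n - 1 := by rw [Set.ncard_sdiff_singleton_of_mem ha₀, hn]
  · have hres : IsResolving adj σ ∅ := fun B _ hB => absurd ⟨B, hB⟩ hbr
    exact (dimT_le_ncard (by simp) hres).trans (by simp)

end SETour
end

section
/- For every single-elimination tournament T with at least 2 players and every scoring system σ, dim(T,σ) ≥ max over matches x ∈ M(T) of (|P(x)| − max over in-neighbors u of x of |P(u)|). -/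
namespace SETour

variable {V : Type*}

open Relation

section Aux

variable {adj : V → V → Prop}

/-- Out-degree ≤ 1 makes forward walks comparable. -/
lemma rtg_comparable (hT : IsSETournament adj) {a v : V} (hv : ReflTransGen adj a v) :
    ∀ {w}, ReflTransGen adj a w →
      ReflTransGen adj v w ∨ ReflTransGen adj w v := by
  induction hv using ReflTransGen.head_induction_on with
  | refl => intro w hw; exact Or.inl hw
  | head h hcv ih =>
    rename_i a' c
    intro w hw
    rcases hw.cases_head with rfl | ⟨d, had, hdw⟩
    · exact Or.inr (ReflTransGen.head h hcv)
    · obtain rfl := hT.out_unique h had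
      exact ih hdw

lemma rtg_antisymm (hT : IsSETournament adj) {v w : V}
    (h1 : ReflTransGen adj v w) (h2 : ReflTransGen adj w v) : v = w := by
  by_contra hne
  rcases h1.cases_head with rfl | ⟨c, hc, hcw⟩
  · exact hne rfl
  · exact hT.acyclic v (TransGen.head' hc (hcw.trans h2))

/-- No vertex can reach two distinct in-neighbors of the same vertex. -/
lemma no_two_preds (hT : IsSETournament adj) {ua ub x v : V}
    (ha : adj ua x) (hb : adj ub x) (hne : ua ≠ ub)
    (h1 : ReflTransGen adj v ua) (h2 : ReflTransGen adj v ub) : False := by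
  rcases rtg_comparable hT h1 h2 with h | h
  · rcases h.cases_head with rfl | ⟨c, hc, hcb⟩
    · exact hne rfl
    · obtain rfl := hT.out_unique hc ha
      exact hT.acyclic c (TransGen.tail' hcb hb)
  · rcases h.cases_head with rfl | ⟨c, hc, hca⟩
    · exact hne rfl
    · obtain rfl := hT.out_unique hc hb
      exact hT.acyclic c (TransGen.tail' hca ha)

/-- If `a` reaches both `ua` (an in-neighbor of `x`) and `v`, then either `v`
is before `ua` on the walk, or `v` is at/after `x`. -/
lemma walk_through (hT : IsSETournament adj) {a ua x v : V}
    (h1 : ReflTransGen adj a ua) (h2 : adj ua x) (h3 : ReflTransGen adj a v) :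
    ReflTransGen adj v ua ∨ ReflTransGen adj x v := by
  rcases rtg_comparable hT h3 h1 with h | h
  · exact Or.inl h
  · rcases h.cases_head with rfl | ⟨c, hc, hcv⟩
    · exact Or.inl ReflTransGen.refl
    · obtain rfl := hT.out_unique hc h2
      exact Or.inr hcv

lemma exists_pred {v : V} (h : ¬ IsPlayer adj v) : ∃ u, adj u v := by
  unfold IsPlayer at h; push_neg at h; exact h

lemma wf_transGen [Finite V] (hT : IsSETournament adj) :
    WellFounded (Relation.TransGen adj) := by
  haveI : IsIrrefl V (Relation.TransGen adj) := ⟨hT.acyclic⟩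
  exact Finite.wellFounded_of_trans_of_irrefl _

/-- Existence of a bracket. -/
lemma exists_bracket [Finite V] (hT : IsSETournament adj) : ∃ B, IsBracket adj B := by
  classical
  have wf := wf_transGen hT
  set F : V → V := wf.fix (fun v ih =>
    if h : IsPlayer adj v then v
    else ih (exists_pred h).choose (TransGen.single (exists_pred h).choose_spec)) with hF
  have heq : ∀ v, F v = if h : IsPlayer adj v then v else F (exists_pred h).choose := by
    intro v
    conv_lhs => rw [hF, WellFounded.fix_eq]
  have hplayer : ∀ v, IsPlayer adj (F v) := by
    intro v
    induction v using WellFounded.induction wf with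
    | _ v ih =>
      rw [heq v]
      split_ifs with h
      · exact h
      · exact ih _ (TransGen.single (exists_pred h).choose_spec)
  refine ⟨F, hplayer, ?_, ?_⟩
  · intro p hp; rw [heq p, dif_pos hp]
  · intro x hx
    exact ⟨(exists_pred hx).choose, (exists_pred hx).choose_spec, by rw [heq x, dif_neg hx]⟩

/-- Favoring a player preserves brackets. -/
lemma fav_isBracket {B : V → V} {a : V} (hB : IsBracket adj B) (ha : IsPlayer adj a) :
    IsBracket adj (favBracket adj B a) := by
  classical
  refine ⟨?_, ?_, ?_⟩
  · intro v
    simp only [favBracket]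
    split_ifs with h
    · exact ha
    · exact hB.toPlayer v
  · intro p hp
    simp only [favBracket]
    split_ifs with h
    · rcases h.2.cases_tail with rfl | ⟨c, _, hcp⟩
      · rfl
      · exact absurd hcp (hp c)
    · exact hB.player_fix p hp
  · intro x hx
    by_cases h : a ∈ playerSet adj x
    · rcases h.2.cases_tail with rfl | ⟨u, hau, hux⟩
      · exact absurd h.1 hx
      · exact ⟨u, hux, by simp only [favBracket, if_pos h, if_pos (show a ∈ playerSet adj u from ⟨h.1, hau⟩)]⟩
    · obtain ⟨u, hux, he⟩ := hB.match_pred x hx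
      refine ⟨u, hux, ?_⟩
      have hu : a ∉ playerSet adj u := fun hau => h ⟨hau.1, hau.2.tail hux⟩
      simp only [favBracket, if_neg h, if_neg hu, he]

/-- In a bracket, the winner of `v` reaches `v` and wins everything between. -/
lemma bracket_chain [Finite V] (hT : IsSETournament adj) {Bi : V → V}
    (hBi : IsBracket adj Bi) (v : V) :
    ReflTransGen adj (Bi v) v ∧
      ∀ w, ReflTransGen adj (Bi v) w → ReflTransGen adj w v → Bi w = Bi v := by
  induction v using WellFounded.induction (wf_transGen hT) with
  | _ v ih =>
    by_cases hv : IsPlayer adj v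
    · rw [hBi.player_fix v hv]
      exact ⟨ReflTransGen.refl, fun w h1 h2 => by
        rw [rtg_antisymm hT h2 h1, hBi.player_fix v hv]⟩
    · obtain ⟨u, hux, he⟩ := hBi.match_pred v hv
      obtain ⟨ihr, ihw⟩ := ih u (TransGen.single hux)
      rw [he]
      refine ⟨ihr.tail hux, fun w h1 h2 => ?_⟩
      by_cases hwv : w = v
      · subst hwv; exact he
      · rcases rtg_comparable hT h1 ihr with hwu | huw
        · exact ihw w h1 hwu
        · rcases huw.cases_head with rfl | ⟨c, hc, hcw⟩
          · rfl
          · obtain rfl := hT.out_unique hc hux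
            exact absurd (rtg_antisymm hT h2 hcw) hwv

/-- Key lemma: a resolving set must contain a bracket whose winner at `x` is
`a` or `b`, whenever `a, b` enter `x` through distinct in-neighbors. -/
lemma key_lemma [Finite V] (hT : IsSETournament adj) {σ : V → ℝ} {𝓑 : Set (V → V)}
    (hall : ∀ B ∈ 𝓑, IsBracket adj B) (hres : IsResolving adj σ 𝓑)
    {x ua ub a b : V} (hx : IsMatch adj x) (hua : adj ua x) (hub : adj ub x)
    (hne : ua ≠ ub) (haP : a ∈ playerSet adj ua) (hbP : b ∈ playerSet adj ub) :
    ∃ Bi ∈ 𝓑, Bi x = a ∨ Bi x = b := by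
  classical
  obtain ⟨B0, hB0⟩ := exists_bracket hT
  have haPl : IsPlayer adj a := haP.1
  have hbPl : IsPlayer adj b := hbP.1
  set C : V → V := favBracket adj (favBracket adj B0 b) a with hCdef
  set C' : V → V := favBracket adj (favBracket adj B0 a) b with hC'def
  have hC : IsBracket adj C := fav_isBracket (fav_isBracket hB0 hbPl) haPl
  have hC' : IsBracket adj C' := fav_isBracket (fav_isBracket hB0 haPl) hbPl
  have hax : ReflTransGen adj a x := haP.2.tail hua
  have hbx : ReflTransGen adj b x := hbP.2.tail hub
  have hab : a ≠ b := fun h => no_two_preds hT hua hub hne haP.2 (h ▸ hbP.2)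
  have hCW : ∀ v, ReflTransGen adj x v → C v = a := by
    intro v hv
    simp only [hCdef, favBracket, if_pos (show a ∈ playerSet adj v from ⟨haPl, hax.trans hv⟩)]
  have hC'W : ∀ v, ReflTransGen adj x v → C' v = b := by
    intro v hv
    simp only [hC'def, favBracket, if_pos (show b ∈ playerSet adj v from ⟨hbPl, hbx.trans hv⟩)]
  have hagree : ∀ v, ¬ ReflTransGen adj x v → C v = C' v := by
    intro v hv
    by_cases hA : a ∈ playerSet adj v <;> by_cases hB : b ∈ playerSet adj v
    · exfalso
      rcases walk_through hT haP.2 hua hA.2 with h | h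
      · rcases walk_through hT hbP.2 hub hB.2 with h' | h'
        · exact no_two_preds hT hua hub hne h h'
        · exact hv h'
      · exact hv h
    all_goals simp only [hCdef, hC'def, favBracket] ; simp [hA, hB]
  have hCC' : C ≠ C' := by
    intro h
    exact hab ((hCW x ReflTransGen.refl).symm.trans ((congrFun h x).trans (hC'W x ReflTransGen.refl)))
  obtain ⟨Bi, hBimem, hBiscore⟩ := hres C C' hC hC' hCC'
  refine ⟨Bi, hBimem, ?_⟩
  by_contra hcon
  push_neg at hcon
  obtain ⟨hna, hnb⟩ := hcon
  apply hBiscore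
  have hBiB := hall Bi hBimem
  have hset : {v | IsMatch adj v ∧ Bi v = C v} = {v | IsMatch adj v ∧ Bi v = C' v} := by
    ext v
    simp only [Set.mem_setOf_eq]
    constructor
    · rintro ⟨hm, hv⟩
      refine ⟨hm, ?_⟩
      by_cases hxv : ReflTransGen adj x v
      · exfalso
        have hva : Bi v = a := hv.trans (hCW v hxv)
        exact hna ((bracket_chain hT hBiB v).2 x (hva ▸ hax) hxv |>.trans hva)
      · rw [hv, hagree v hxv]
    · rintro ⟨hm, hv⟩
      refine ⟨hm, ?_⟩
      by_cases hxv : ReflTransGen adj x v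
      · exfalso
        have hvb : Bi v = b := hv.trans (hC'W v hxv)
        exact hnb ((bracket_chain hT hBiB v).2 x (hvb ▸ hbx) hxv |>.trans hvb)
      · rw [hv, ← hagree v hxv]
  unfold score
  rw [hset]

/-- The set of all brackets is resolving for any scoring system. -/
lemma full_resolving [Finite V] (σ : V → ℝ) (hσ : IsScoring adj σ) :
    IsResolving adj σ {B | IsBracket adj B} := by
  intro B B' hB hB' hne
  refine ⟨B, hB, ?_⟩
  obtain ⟨v, hv⟩ := Function.ne_iff.mp hne
  have hvm : IsMatch adj v := by
    intro hvp
    exact hv (by rw [hB.player_fix v hvp, hB'.player_fix v hvp])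
  have h1 : {x | IsMatch adj x ∧ B x = B x} = {x | IsMatch adj x} := by simp
  unfold score
  rw [h1, finsum_mem_eq_finite_toFinset_sum σ (Set.toFinite _),
    finsum_mem_eq_finite_toFinset_sum σ (Set.toFinite _)]
  refine ne_of_gt (Finset.sum_lt_sum_of_subset (i := v) ?_ ?_ ?_ (hσ v hvm) ?_)
  · intro j hj
    simp only [Set.Finite.mem_toFinset, Set.mem_setOf_eq] at hj ⊢
    exact hj.1
  · simp only [Set.Finite.mem_toFinset, Set.mem_setOf_eq]; exact hvm
  · simp only [Set.Finite.mem_toFinset, Set.mem_setOf_eq]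
    exact fun h => hv h.2
  · intro j hj _
    simp only [Set.Finite.mem_toFinset, Set.mem_setOf_eq] at hj
    exact (hσ j hj).le

/-- Per-match counting bound. -/
lemma match_bound [Finite V] (hT : IsSETournament adj) {σ : V → ℝ} {𝓑 : Set (V → V)}
    (hall : ∀ B ∈ 𝓑, IsBracket adj B) (hres : IsResolving adj σ 𝓑)
    {x : V} (hx : IsMatch adj x) :
    (playerSet adj x).ncard ≤
      𝓑.ncard + sSup {m | ∃ u, adj u x ∧ m = (playerSet adj u).ncard} := by
  classical
  set T : Set V := (fun B => B x) '' 𝓑 with hT2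
  set Bad : Set V := playerSet adj x \ T with hBad
  have hpred : ∀ a ∈ playerSet adj x, ∃ u, adj u x ∧ a ∈ playerSet adj u := by
    rintro a ⟨hap, har⟩
    rcases har.cases_tail with rfl | ⟨u, hau, hux⟩
    · exact absurd hap hx
    · exact ⟨u, hux, hap, hau⟩
  obtain ⟨u0, hu0x, hu0⟩ : ∃ u0, adj u0 x ∧ Bad ⊆ playerSet adj u0 := by
    rcases Set.eq_empty_or_nonempty Bad with hB | ⟨a0, ha0⟩
    · obtain ⟨u, hu⟩ := exists_pred hx
      exact ⟨u, hu, by rw [hB]; exact Set.empty_subset _⟩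
    · obtain ⟨u0, hu0x, ha0u⟩ := hpred a0 ha0.1
      refine ⟨u0, hu0x, ?_⟩
      rintro b hb
      obtain ⟨ub, hubx, hbu⟩ := hpred b hb.1
      by_cases h : ub = u0
      · exact h ▸ hbu
      · exfalso
        obtain ⟨Bi, hBim, hBix⟩ :=
          key_lemma hT hall hres hx hu0x hubx (fun e => h e.symm) ha0u hbu
        rcases hBix with h' | h'
        · exact ha0.2 ⟨Bi, hBim, h'⟩
        · exact hb.2 ⟨Bi, hBim, h'⟩
  have hsub : playerSet adj x ⊆ playerSet adj u0 ∪ T := by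
    intro a ha
    by_cases h : a ∈ T
    · exact Or.inr h
    · exact Or.inl (hu0 ⟨ha, h⟩)
  have hbdd : BddAbove {m | ∃ u, adj u x ∧ m = (playerSet adj u).ncard} := by
    refine ⟨Nat.card V, ?_⟩
    rintro m ⟨u, _, rfl⟩
    calc (playerSet adj u).ncard ≤ (Set.univ : Set V).ncard :=
          Set.ncard_le_ncard (Set.subset_univ _) (Set.toFinite _)
      _ = Nat.card V := Set.ncard_univ V
  calc (playerSet adj x).ncard
      ≤ (playerSet adj u0 ∪ T).ncard := Set.ncard_le_ncard hsub (Set.toFinite _)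
    _ ≤ (playerSet adj u0).ncard + T.ncard := Set.ncard_union_le _ _
    _ ≤ sSup {m | ∃ u, adj u x ∧ m = (playerSet adj u).ncard} + 𝓑.ncard := by
        refine add_le_add (le_csSup hbdd ⟨u0, hu0x, rfl⟩) ?_
        exact Set.ncard_image_le (Set.toFinite _)
    _ = 𝓑.ncard + sSup {m | ∃ u, adj u x ∧ m = (playerSet adj u).ncard} := add_comm _ _

end Aux

/-- For every single-elimination tournament with at least 2 players
and any scoring system σ,
`dim(T,σ) ≥ max_{x ∈ M(T)} (|P(x)| − max_{u ∈ N⁻(x)} |P(u)|)`. -/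
theorem statement_2 {V : Type*} [Finite V] (adj : V → V → Prop)
    (hT : IsSETournament adj) (h2 : 2 ≤ (players adj).ncard)
    (σ : V → ℝ) (hσ : IsScoring adj σ) :
    lbound adj ≤ dimT adj σ := by
  classical
  have hDne : {n | ∃ 𝓑 : Set (V → V), (∀ B ∈ 𝓑, IsBracket adj B) ∧
      IsResolving adj σ 𝓑 ∧ 𝓑.ncard = n}.Nonempty :=
    ⟨_, {B | IsBracket adj B}, fun B hB => hB, full_resolving σ hσ, rfl⟩
  obtain ⟨𝓑, hall, hres, hcard⟩ := Nat.sInf_mem hDne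
  unfold lbound dimT
  rcases Set.eq_empty_or_nonempty {k | ∃ x, IsMatch adj x ∧
      k = (playerSet adj x).ncard -
        sSup {m | ∃ u, adj u x ∧ m = (playerSet adj u).ncard}} with hK | hK
  · rw [hK, csSup_empty]
    exact Nat.zero_le _
  · refine csSup_le hK ?_
    rintro k ⟨x, hx, rfl⟩
    have hmb := match_bound hT hall hres hx
    rw [hcard] at hmb
    omega


end SETour
end

section
/- Let T be a single-elimination tournament with at least 2 players and a total of N brackets, and define q_pair = (min over pairs of distinct players a, b of the number of brackets B with B(x_{a,b}) ∈ {a,b})/N. If σ is a scoring system with distinct subset sums, then res(T,σ) = (1 − q_pair)·N + 1. -/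
namespace SETour

variable {V : Type*}

section Aux

variable {V : Type*} [Finite V] {adj : V → V → Prop}

lemma aux_wf (hT : IsSETournament adj) : WellFounded adj := by
  haveI h1 : IsTrans V (Relation.TransGen adj) := ⟨fun a b c => Relation.TransGen.trans⟩
  haveI h2 : IsIrrefl V (Relation.TransGen adj) := ⟨hT.acyclic⟩
  exact Subrelation.wf (fun h => Relation.TransGen.single h)
    (Finite.wellFounded_of_trans_of_irrefl _)

omit [Finite V] in
/-- Comparability of vertices reachable from a common vertex. -/
lemma aux_comparable (hT : IsSETournament adj) {u2 : V} :
    ∀ {c u1 : V}, Relation.ReflTransGen adj c u1 → Relation.ReflTransGen adj c u2 →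
    Relation.ReflTransGen adj u1 u2 ∨ Relation.ReflTransGen adj u2 u1 := by
  intro c u1 h1
  induction h1 using Relation.ReflTransGen.head_induction_on with
  | refl => exact fun h2 => Or.inl h2
  | head h' hsub ih =>
    intro h2
    rcases Relation.ReflTransGen.cases_head h2 with heq | ⟨d, had, hd2⟩
    · rw [← heq]
      exact Or.inr (Relation.ReflTransGen.head h' hsub)
    · exact ih (by rw [hT.out_unique h' had]; exact hd2)

omit [Finite V] in
lemma aux_inpred_eq (hT : IsSETournament adj) {u1 u2 y : V}
    (h1 : adj u1 y) (h2 : adj u2 y) (h12 : Relation.ReflTransGen adj u1 u2) : u1 = u2 := by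
  rcases Relation.ReflTransGen.cases_head h12 with heq | ⟨d, hd, hdu2⟩
  · exact heq
  · rw [hT.out_unique hd h1] at hdu2
    exact absurd (Relation.TransGen.tail' hdu2 h2) (hT.acyclic y)

omit [Finite V] in
/-- Player sets of distinct in-neighbors are disjoint. -/
lemma aux_disjoint (hT : IsSETournament adj) {u1 u2 y : V}
    (h1 : adj u1 y) (h2 : adj u2 y) (hne : u1 ≠ u2) {p : V}
    (hp1 : p ∈ playerSet adj u1) (hp2 : p ∈ playerSet adj u2) : False := by
  rcases aux_comparable hT hp1.2 hp2.2 with h | h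
  · exact hne (aux_inpred_eq hT h1 h2 h)
  · exact hne (aux_inpred_eq hT h2 h1 h).symm

omit [Finite V] in
lemma aux_playerSet_mono {u v : V} (h : Relation.ReflTransGen adj u v) :
    playerSet adj u ⊆ playerSet adj v := fun p hp => ⟨hp.1, hp.2.trans h⟩

lemma aux_bracket_mem (hT : IsSETournament adj) {B : V → V} (hB : IsBracket adj B) (v : V) :
    B v ∈ playerSet adj v := by
  induction v using (aux_wf hT).induction with
  | _ v ih =>
    by_cases hv : IsPlayer adj v
    · rw [hB.player_fix v hv]; exact ⟨hv, Relation.ReflTransGen.refl⟩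
    · obtain ⟨u, hu, heq⟩ := hB.match_pred v hv
      rw [heq]
      exact aux_playerSet_mono (Relation.ReflTransGen.single hu) (ih u hu)

omit [Finite V] in
lemma aux_playerSet_player {p : V} (hp : IsPlayer adj p) : playerSet adj p = {p} := by
  ext c
  constructor
  · rintro ⟨hc, hwalk⟩
    rcases Relation.ReflTransGen.cases_tail hwalk with h | ⟨d, _, hd⟩
    · exact h.symm
    · exact absurd hd (hp d)
  · rintro rfl; exact ⟨hp, Relation.ReflTransGen.refl⟩

/-- There exists a bracket. -/
lemma aux_exists_bracket (hT : IsSETournament adj) : ∃ B : V → V, IsBracket adj B := by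
  classical
  have hwf := aux_wf hT
  refine ⟨hwf.fix (fun v ih => if h : IsPlayer adj v then v
    else ih (not_forall_not.mp h).choose (not_forall_not.mp h).choose_spec), ?_⟩
  set B := hwf.fix (fun v ih => if h : IsPlayer adj v then v
    else ih (not_forall_not.mp h).choose (not_forall_not.mp h).choose_spec) with hBdef
  have hfix : ∀ v, B v = if h : IsPlayer adj v then v
      else B (not_forall_not.mp h).choose := fun v => hwf.fix_eq _ v
  have hplayer : ∀ v, IsPlayer adj (B v) := by
    intro v
    induction v using hwf.induction with
    | _ v ih =>
      rw [hfix v]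
      split
      · assumption
      · next h => exact ih _ (not_forall_not.mp h).choose_spec
  refine ⟨hplayer, fun a ha => by rw [hfix a, dif_pos ha], fun x hx => ?_⟩
  exact ⟨(not_forall_not.mp hx).choose, (not_forall_not.mp hx).choose_spec,
    by rw [hfix x, dif_neg hx]⟩

/-- favBracket preserves bracketness. -/
lemma aux_fav_bracket (hT : IsSETournament adj) {B : V → V} (hB : IsBracket adj B)
    {a : V} (ha : IsPlayer adj a) : IsBracket adj (favBracket adj B a) := by
  classical
  constructor
  · intro v
    unfold favBracket
    split
    · exact ha
    · exact hB.toPlayer v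
  · intro p hp
    unfold favBracket
    rw [aux_playerSet_player hp]
    split
    · next h => exact h
    · exact hB.player_fix p hp
  · intro x hx
    unfold favBracket
    by_cases hax : a ∈ playerSet adj x
    · have hwalk := hax.2
      have hne : a ≠ x := fun h => hx (h ▸ hax.1)
      obtain ⟨u, hwalku, hu⟩ : ∃ u, Relation.ReflTransGen adj a u ∧ adj u x := by
        rcases Relation.ReflTransGen.cases_tail hwalk with h | ⟨d, hd1, hd2⟩
        · exact absurd h.symm hne
        · exact ⟨d, hd1, hd2⟩
      refine ⟨u, hu, ?_⟩
      rw [if_pos hax, if_pos ⟨hax.1, hwalku⟩]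
    · obtain ⟨u, hu, heq⟩ := hB.match_pred x hx
      have hau : a ∉ playerSet adj u := fun h =>
        hax (aux_playerSet_mono (Relation.ReflTransGen.single hu) h)
      exact ⟨u, hu, by rw [if_neg hax, if_neg hau, heq]⟩

open Classical in
/-- Reroute a bracket below a match `x`: a common "rest" function `C` such that for any
in-neighbor `u` of `x`, overriding the value at `x` by `B u` and using `C` elsewhere
gives a bracket. -/
lemma aux_mod (hT : IsSETournament adj) {B : V → V} (hB : IsBracket adj B)
    {x : V} (hx : IsMatch adj x) :
    ∃ C : V → V, ∀ u, adj u x → IsBracket adj (fun y => if y = x then B u else C y) := by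
  classical
  have hin2 : ∀ y, Relation.ReflTransGen adj x y → y ≠ x →
      ∃ w, adj w y ∧ ¬ Relation.ReflTransGen adj x w := by
    intro y hxy hyx
    obtain ⟨z, hzD, hzy⟩ : ∃ z, Relation.ReflTransGen adj x z ∧ adj z y := by
      rcases Relation.ReflTransGen.cases_tail hxy with h | ⟨d, hd1, hd2⟩
      · exact absurd h hyx
      · exact ⟨d, hd1, hd2⟩
    by_contra hcon
    push_neg at hcon
    have hfin : {u | adj u y}.Finite := Set.toFinite _
    have hpos : 0 < {u | adj u y}.ncard := (Set.ncard_pos hfin).mpr ⟨z, hzy⟩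
    have hne1 := hT.in_ne_one y
    have h1lt : 1 < {u | adj u y}.ncard := by omega
    obtain ⟨z1, hz1, z2, hz2, hz12⟩ := (Set.one_lt_ncard hfin).mp h1lt
    have hD1 : Relation.ReflTransGen adj x z1 := hcon z1 hz1
    have hD2 : Relation.ReflTransGen adj x z2 := hcon z2 hz2
    rcases aux_comparable hT hD1 hD2 with h | h
    · exact hz12 (aux_inpred_eq hT hz1 hz2 h)
    · exact hz12 (aux_inpred_eq hT hz2 hz1 h).symm
  set C : V → V := fun y =>
    if h : Relation.ReflTransGen adj x y ∧ y ≠ x then B (hin2 y h.1 h.2).choose else B y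
    with hCdef
  have hCout : ∀ y, ¬ (Relation.ReflTransGen adj x y ∧ y ≠ x) → C y = B y :=
    fun y h => dif_neg h
  have hCin : ∀ y (h : Relation.ReflTransGen adj x y ∧ y ≠ x),
      C y = B (hin2 y h.1 h.2).choose := fun y h => dif_pos h
  refine ⟨C, fun u hu => ?_⟩
  have hux : ¬ Relation.ReflTransGen adj x u :=
    fun h => hT.acyclic x (Relation.TransGen.tail' h hu)
  constructor
  · intro v
    show IsPlayer adj (if v = x then B u else C v)
    by_cases hv : v = x
    · rw [if_pos hv]; exact hB.toPlayer u
    · rw [if_neg hv]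
      by_cases h : Relation.ReflTransGen adj x v ∧ v ≠ x
      · rw [hCin v h]; exact hB.toPlayer _
      · rw [hCout v h]; exact hB.toPlayer v
  · intro p hp
    have hpx : p ≠ x := fun h => hx (h ▸ hp)
    show (if p = x then B u else C p) = p
    rw [if_neg hpx, hCout p, hB.player_fix p hp]
    rintro ⟨h1, h2⟩
    rcases Relation.ReflTransGen.cases_tail h1 with h | ⟨d, _, hd⟩
    · exact h2 h
    · exact hp d hd
  · intro y hy
    by_cases hyx : y = x
    · subst hyx
      refine ⟨u, hu, ?_⟩
      have hunx : u ≠ y := by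
        intro h
        rw [h] at hu
        exact hT.acyclic y (Relation.TransGen.single hu)
      show (if y = y then B u else C y) = (if u = y then B u else C u)
      rw [if_pos rfl, if_neg hunx, hCout u (fun h => hux h.1)]
    · by_cases hD : Relation.ReflTransGen adj x y
      · obtain ⟨hw1, hw2⟩ := (hin2 y hD hyx).choose_spec
        refine ⟨(hin2 y hD hyx).choose, hw1, ?_⟩
        have hwx : (hin2 y hD hyx).choose ≠ x := by
          intro he
          exact hw2 (by rw [he])
        show (if y = x then B u else C y)
            = (if (hin2 y hD hyx).choose = x then B u else C (hin2 y hD hyx).choose)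
        rw [if_neg hyx, if_neg hwx, hCin y ⟨hD, hyx⟩, hCout _ (fun h => hw2 h.1)]
      · obtain ⟨u', hu', heq⟩ := hB.match_pred y hy
        have hu'x : u' ≠ x := by
          intro h
          rw [h] at hu'
          exact hD (Relation.ReflTransGen.single hu')
        have hu'D : ¬ Relation.ReflTransGen adj x u' := fun hh => hD (hh.tail hu')
        refine ⟨u', hu', ?_⟩
        show (if y = x then B u else C y) = (if u' = x then B u else C u')
        rw [if_neg hyx, if_neg hu'x, hCout y (fun h => hD h.1),
          hCout u' (fun h => hu'D h.1)]
        exact heq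

end Aux

/-- With `N` and `q_pair` as before, if σ has distinct subset sums
then `res(T,σ) = (1 − q_pair) N + 1`. -/
theorem statement_6 {V : Type*} [Finite V] (adj : V → V → Prop)
    (hT : IsSETournament adj) (h2 : 2 ≤ (players adj).ncard)
    (N : ℕ) (hN : N = {B : V → V | IsBracket adj B}.ncard)
    (qpair : ℝ)
    (hq : IsLeast {q : ℝ | ∃ a b x : V, IsPlayer adj a ∧ IsPlayer adj b ∧ a ≠ b ∧
      IsMatch adj x ∧ IsPairMatch adj a b x ∧
      q = ({B : V → V | IsBracket adj B ∧ (B x = a ∨ B x = b)}.ncard : ℝ) / N} qpair)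
    (σ : V → ℝ) (hσ : IsScoring adj σ) (hd : DistinctSubsetSums adj σ) :
    (resT adj σ : ℝ) = (1 - qpair) * N + 1 := by
  classical
  obtain ⟨hqmem, hqmin⟩ := hq
  obtain ⟨a, b, x, ha, hb, hab, hx, hpm, hqe⟩ := hqmem
  obtain ⟨ua, ub, hua, hub, hIa, hIb⟩ := hpm
  -- basic membership facts for the minimizing pair
  have haua : a ∈ playerSet adj ua := by
    have h : a ∈ playerSet adj ua ∩ {a, b} := by rw [hIa]; exact rfl
    exact h.1
  have hbub : b ∈ playerSet adj ub := by
    have h : b ∈ playerSet adj ub ∩ {a, b} := by rw [hIb]; exact rfl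
    exact h.1
  have hbua : b ∉ playerSet adj ua := by
    intro h
    have hmem : b ∈ playerSet adj ua ∩ {a, b} := ⟨h, Or.inr rfl⟩
    rw [hIa] at hmem
    exact hab (Set.mem_singleton_iff.mp hmem).symm
  -- a base bracket and its two favorings
  obtain ⟨B0, hB0⟩ := aux_exists_bracket hT
  have hB1 : IsBracket adj (favBracket adj B0 a) := aux_fav_bracket hT hB0 ha
  have hB2 : IsBracket adj (favBracket adj (favBracket adj B0 a) b) :=
    aux_fav_bracket hT hB1 hb
  set B2 := favBracket adj (favBracket adj B0 a) b with hB2def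
  have hB2ua : B2 ua = a := by
    rw [hB2def]
    unfold favBracket
    rw [if_neg hbua, if_pos haua]
  have hB2ub : B2 ub = b := by
    rw [hB2def]
    unfold favBracket
    rw [if_pos hbub]
  -- the two rerouted brackets differing exactly at x
  obtain ⟨C, hC⟩ := aux_mod hT hB2 hx
  have hBA : IsBracket adj (fun y => if y = x then B2 ua else C y) := hC ua hua
  have hBB : IsBracket adj (fun y => if y = x then B2 ub else C y) := hC ub hub
  set BA : V → V := fun y => if y = x then B2 ua else C y with hBAdef
  set BB : V → V := fun y => if y = x then B2 ub else C y with hBBdef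
  have hBAx : BA x = a := by rw [hBAdef]; simp [hB2ua]
  have hBBx : BB x = b := by rw [hBBdef]; simp [hB2ub]
  have hABne : BA ≠ BB := by
    intro h
    have := congrFun h x
    rw [hBAx, hBBx] at this
    exact hab this
  have hAgree : ∀ y, y ≠ x → BA y = BB y := by
    intro y hy
    rw [hBAdef, hBBdef]
    simp [hy]
  -- counting setup
  set A : Set (V → V) := {B | IsBracket adj B} with hAdef
  set G : Set (V → V) := {B : V → V | IsBracket adj B ∧ (B x = a ∨ B x = b)} with hGdef
  set c : ℕ := G.ncard with hcdef
  have hGA : G ⊆ A := fun B hB => hB.1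
  have hcN : c ≤ N := by rw [hN]; exact Set.ncard_le_ncard hGA (Set.toFinite _)
  have hN1 : 1 ≤ N := by
    rw [hN]; exact (Set.ncard_pos (Set.toFinite _)).mpr ⟨B0, hB0⟩
  have hNpos : (0 : ℝ) < N := by exact_mod_cast hN1
  -- Key 1 (upper bound): every family of N - c + 1 brackets is resolving
  have hkey : ∀ 𝓑 : Set (V → V), (∀ B ∈ 𝓑, IsBracket adj B) → 𝓑.ncard = N - c + 1 →
      IsResolving adj σ 𝓑 := by
    intro 𝓑 h𝓑 hcard B B' hBb hB'b hne
    have hSd : {v | B v ≠ B' v}.Nonempty := Function.ne_iff.mp hne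
    obtain ⟨y, hy, hymin⟩ := (aux_wf hT).has_min _ hSd
    have hagree : ∀ u, adj u y → B u = B' u := by
      intro u hadj
      by_contra hne'
      exact hymin u hne' hadj
    have hym : IsMatch adj y := by
      intro hp
      exact hy (by rw [hBb.player_fix y hp, hB'b.player_fix y hp])
    obtain ⟨u1, hu1, he1⟩ := hBb.match_pred y hym
    obtain ⟨u2, hu2, he2⟩ := hB'b.match_pred y hym
    have ha'b' : B y ≠ B' y := hy
    have hu12 : u1 ≠ u2 := by
      rintro rfl
      exact ha'b' (he1.trans ((hagree u1 hu1).trans he2.symm))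
    have ha'1 : B y ∈ playerSet adj u1 := by
      rw [he1]; exact aux_bracket_mem hT hBb u1
    have hb'2 : B' y ∈ playerSet adj u2 := by
      rw [he2]; exact aux_bracket_mem hT hB'b u2
    have hpm' : IsPairMatch adj (B y) (B' y) y := by
      refine ⟨u1, u2, hu1, hu2, ?_, ?_⟩
      · apply Set.eq_singleton_iff_unique_mem.mpr
        refine ⟨⟨ha'1, Or.inl rfl⟩, ?_⟩
        rintro s ⟨hs1, hs2⟩
        rcases hs2 with rfl | rfl
        · rfl
        · exact absurd (aux_disjoint hT hu1 hu2 hu12 hs1 hb'2) not_false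
      · apply Set.eq_singleton_iff_unique_mem.mpr
        refine ⟨⟨hb'2, Or.inr rfl⟩, ?_⟩
        rintro s ⟨hs1, hs2⟩
        rcases hs2 with rfl | rfl
        · exact absurd (aux_disjoint hT hu1 hu2 hu12 ha'1 hs1) not_false
        · rfl
    set G' : Set (V → V) := {Bi : V → V | IsBracket adj Bi ∧ (Bi y = B y ∨ Bi y = B' y)}
      with hG'def
    have hle : qpair ≤ (G'.ncard : ℝ) / N :=
      hqmin ⟨B y, B' y, y, hBb.toPlayer y, hB'b.toPlayer y, ha'b', hym, hpm', rfl⟩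
    have hcc' : c ≤ G'.ncard := by
      rw [hqe] at hle
      exact_mod_cast (div_le_div_iff_of_pos_right hNpos).mp hle
    have hG'A : G' ⊆ A := fun _ h => h.1
    have hc'N : G'.ncard ≤ N := by
      rw [hN]; exact Set.ncard_le_ncard hG'A (Set.toFinite _)
    obtain ⟨Bi, hBi𝓑, hBiG⟩ : ∃ Bi ∈ 𝓑, Bi ∈ G' := by
      by_contra hcon
      push_neg at hcon
      have hsub : 𝓑 ⊆ A \ G' := fun Bi h => ⟨h𝓑 Bi h, hcon Bi h⟩
      have hle2 := Set.ncard_le_ncard hsub (Set.toFinite _)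
      rw [hcard, Set.ncard_diff hG'A (Set.toFinite _), ← hN] at hle2
      omega
    refine ⟨Bi, hBi𝓑, ?_⟩
    intro hsc
    have hsc' : (∑ᶠ z ∈ {z | IsMatch adj z ∧ Bi z = B z}, σ z)
        = ∑ᶠ z ∈ {z | IsMatch adj z ∧ Bi z = B' z}, σ z := hsc
    have hsets := hd {z | IsMatch adj z ∧ Bi z = B z} {z | IsMatch adj z ∧ Bi z = B' z}
      (fun z hz => hz.1) (fun z hz => hz.1) hsc'
    rcases hBiG.2 with hBi | hBi
    · have h1 : y ∈ {z | IsMatch adj z ∧ Bi z = B z} := ⟨hym, hBi⟩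
      rw [hsets] at h1
      exact ha'b' (hBi.symm.trans h1.2)
    · have h1 : y ∈ {z | IsMatch adj z ∧ Bi z = B' z} := ⟨hym, hBi⟩
      rw [← hsets] at h1
      exact ha'b' (h1.2.symm.trans hBi)
  -- Key 2 (lower bound): no r ≤ N - c works
  have hkey2 : ∀ r : ℕ, r ≤ N - c →
      ¬ (∀ 𝓑 : Set (V → V), (∀ B ∈ 𝓑, IsBracket adj B) → 𝓑.ncard = r →
        IsResolving adj σ 𝓑) := by
    intro r hr hcon
    have hFcard : (A \ G).ncard = N - c := by
      rw [Set.ncard_diff hGA (Set.toFinite _), ← hN]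
    obtain ⟨𝓑, h𝓑sub, h𝓑card⟩ :=
      Set.exists_subset_card_eq (s := A \ G) (n := r) (by rw [hFcard]; exact hr)
    obtain ⟨Bi, hBi, hne⟩ :=
      hcon 𝓑 (fun B hB => (h𝓑sub hB).1) h𝓑card BA BB hBA hBB hABne
    apply hne
    have hor : ¬ (Bi x = a ∨ Bi x = b) := fun h => (h𝓑sub hBi).2 ⟨(h𝓑sub hBi).1, h⟩
    have hsame : {z | IsMatch adj z ∧ Bi z = BA z} = {z | IsMatch adj z ∧ Bi z = BB z} := by
      ext z
      by_cases hz : z = x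
      · subst hz
        exact iff_of_false (fun h => hor (Or.inl (h.2.trans hBAx)))
          (fun h => hor (Or.inr (h.2.trans hBBx)))
      · simp only [Set.mem_setOf_eq]
        rw [hAgree z hz]
    show (∑ᶠ z ∈ {z | IsMatch adj z ∧ Bi z = BA z}, σ z)
        = ∑ᶠ z ∈ {z | IsMatch adj z ∧ Bi z = BB z}, σ z
    rw [hsame]
  -- compute resT
  have hresT : resT adj σ = N - c + 1 := by
    unfold resT
    refine le_antisymm (Nat.sInf_le hkey) ?_
    by_contra hlt
    push_neg at hlt
    have hin := Nat.sInf_mem (s := {r | ∀ 𝓑 : Set (V → V),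
      (∀ B ∈ 𝓑, IsBracket adj B) → 𝓑.ncard = r → IsResolving adj σ 𝓑}) ⟨_, hkey⟩
    exact hkey2 _ (by omega) hin
  rw [hresT, hqe]
  have hNne : (N : ℝ) ≠ 0 := ne_of_gt hNpos
  rw [Nat.cast_add, Nat.cast_sub hcN, Nat.cast_one]
  field_simp


end SETour
end

section
/- Let T be a single-elimination tournament. If 𝓑 is a set of brackets of T and there exist two distinct players a, b such that B_i(x_{a,b}) ∉ {a,b} for every B_i ∈ 𝓑, then 𝓑 is not σ-resolving for any scoring system σ. -/
namespace SETour

variable {V : Type*}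

section Aux

open Relation

/-- A player has no predecessors, hence nothing walks to it except itself. -/
lemma player_no_pred {adj : V → V → Prop} {p w : V} (hp : IsPlayer adj p)
    (h : ReflTransGen adj w p) : w = p := by
  rcases h.cases_tail with h | ⟨c, _, hc⟩
  · exact h.symm
  · exact absurd hc (hp c)

/-- With unique out-neighbors, two vertices reachable from the same vertex are comparable. -/
lemma reach_comparable {adj : V → V → Prop}
    (hout : ∀ ⦃v w w'⦄, adj v w → adj v w' → w = w')
    {p u u' : V} (h : ReflTransGen adj p u) (h' : ReflTransGen adj p u') :
    ReflTransGen adj u u' ∨ ReflTransGen adj u' u := by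
  induction h with
  | refl => exact Or.inl h'
  | tail hpc hcu IH =>
    rename_i c u
    rcases IH with hc | hc
    · rcases hc.cases_head with rfl | ⟨d, hcd, hdu'⟩
      · exact Or.inr (ReflTransGen.single hcu)
      · exact Or.inl (by rw [hout hcu hcd] at *; exact hdu')
    · exact Or.inr (hc.tail hcu)

/-- Two in-neighbors of the same vertex that are comparable must be equal. -/
lemma inpred_eq {adj : V → V → Prop} (hT : IsSETournament adj)
    {u u' v : V} (hu : adj u v) (hu' : adj u' v)
    (h : ReflTransGen adj u u') : u = u' := by
  rcases h.cases_head with rfl | ⟨d, hud, hdu'⟩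
  · rfl
  · exfalso
    have hdv : d = v := hT.out_unique hud hu
    subst hdv
    exact hT.acyclic _ (Relation.TransGen.tail' hdu' hu')

/-- The winner of a vertex in a bracket walks to that vertex. -/
lemma bracket_reach {adj : V → V → Prop} (hwf : WellFounded adj)
    {C : V → V} (hC : IsBracket adj C) (v : V) :
    ReflTransGen adj (C v) v := by
  induction v using hwf.induction with
  | _ v IH =>
    by_cases hp : IsPlayer adj v
    · rw [hC.player_fix v hp]
    · obtain ⟨u, hu, hcu⟩ := hC.match_pred v hp
      rw [hcu]
      exact (IH u hu).tail hu

/-- A bracket is constant (equal to the winner) along the winner's walk. -/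
lemma bracket_const {adj : V → V → Prop} (hT : IsSETournament adj)
    (hwf : WellFounded adj) {C : V → V} (hC : IsBracket adj C) (v : V) :
    ∀ w, ReflTransGen adj (C v) w → ReflTransGen adj w v → C w = C v := by
  induction v using hwf.induction with
  | _ v IH =>
    intro w h1 h2
    rcases h2.cases_tail with rfl | ⟨u', hwu', hu'v⟩
    · rfl
    by_cases hp : IsPlayer adj v
    · exact absurd hu'v (hp u')
    obtain ⟨u, hu, hcu⟩ := hC.match_pred v hp
    have hreachu : ReflTransGen adj (C v) u := by
      rw [hcu]; exact bracket_reach hwf hC u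
    have hreachu' : ReflTransGen adj (C v) u' := h1.trans hwu'
    have huu' : u = u' := by
      rcases reach_comparable hT.out_unique hreachu hreachu' with h | h
      · exact inpred_eq hT hu hu'v h
      · exact (inpred_eq hT hu'v hu h).symm
    subst huu'
    rw [hcu]
    exact IH u hu w (hcu ▸ h1) hwu'

/-- `favBracket` of a bracket is a bracket. -/
lemma favBracket_isBracket {adj : V → V → Prop}
    {C : V → V} (hC : IsBracket adj C) {p : V} (hp : IsPlayer adj p) :
    IsBracket adj (favBracket adj C p) := by
  constructor
  · intro v
    unfold favBracket
    split
    · exact hp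
    · exact hC.toPlayer v
  · intro q hq
    unfold favBracket
    split
    · next h => exact (player_no_pred hq h.2).symm ▸ rfl
    · exact hC.player_fix q hq
  · intro m hm
    by_cases hpm : p ∈ playerSet adj m
    · have hne : p ≠ m := fun h => hm (h ▸ hp)
      obtain ⟨u, hpu, hum⟩ : ∃ u, ReflTransGen adj p u ∧ adj u m := by
        rcases hpm.2.cases_tail with h | h
        · exact absurd h.symm hne
        · exact h
      refine ⟨u, hum, ?_⟩
      have hpu' : p ∈ playerSet adj u := ⟨hp, hpu⟩
      simp only [favBracket, if_pos hpm, if_pos hpu']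
    · obtain ⟨u, hum, hcu⟩ := hC.match_pred m hm
      refine ⟨u, hum, ?_⟩
      have hpu : p ∉ playerSet adj u := fun h => hpm ⟨h.1, h.2.tail hum⟩
      simp only [favBracket, if_neg hpm, if_neg hpu, hcu]

open Classical in
/-- A base bracket always exists. -/
noncomputable def baseBracket (adj : V → V → Prop) (hwf : WellFounded adj) : V → V :=
  hwf.fix fun v IH =>
    if h : IsPlayer adj v then v
    else IH (Classical.not_forall_not.mp h).choose (Classical.not_forall_not.mp h).choose_spec

lemma baseBracket_isBracket {adj : V → V → Prop} (hwf : WellFounded adj) :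
    IsBracket adj (baseBracket adj hwf) := by
  classical
  have heq : ∀ v, baseBracket adj hwf v =
      if h : IsPlayer adj v then v
      else baseBracket adj hwf (Classical.not_forall_not.mp h).choose := fun v => by
    rw [baseBracket, WellFounded.fix_eq]
  constructor
  · intro v
    induction v using hwf.induction with
    | _ v IH =>
      rw [heq v]
      split
      · next h => exact h
      · next h => exact IH _ (Classical.not_forall_not.mp h).choose_spec
  · intro q hq
    rw [heq q, dif_pos hq]
  · intro m hm
    refine ⟨(Classical.not_forall_not.mp hm).choose, (Classical.not_forall_not.mp hm).choose_spec, ?_⟩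
    rw [heq m, dif_neg hm]

end Aux

/-- If every bracket of `𝓑` predicts the winner of `x_{a,b}` to be
neither `a` nor `b`, then `𝓑` is not σ-resolving for any scoring system σ. -/
theorem statement_9 {V : Type*} [Finite V] (adj : V → V → Prop)
    (hT : IsSETournament adj)
    (𝓑 : Set (V → V)) (h𝓑 : ∀ B ∈ 𝓑, IsBracket adj B)
    (a b : V) (ha : IsPlayer adj a) (hb : IsPlayer adj b) (hab : a ≠ b)
    (x : V) (hxm : IsMatch adj x) (hx : IsPairMatch adj a b x)
    (hmiss : ∀ Bi ∈ 𝓑, Bi x ≠ a ∧ Bi x ≠ b)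
    (σ : V → ℝ) (hσ : IsScoring adj σ) :
    ¬ IsResolving adj σ 𝓑 := by
  intro hres
  have hwf : WellFounded adj := by
    haveI : IsIrrefl V (Relation.TransGen adj) := ⟨hT.acyclic⟩
    exact Subrelation.wf (fun {x y} h => Relation.TransGen.single h)
      (Finite.wellFounded_of_trans_of_irrefl _)
  obtain ⟨ua, ub, hua, hub, hPa, hPb⟩ := hx
  have haua : a ∈ playerSet adj ua := (hPa.symm ▸ (Set.mem_singleton a)).1
  have hbub : b ∈ playerSet adj ub := (hPb.symm ▸ (Set.mem_singleton b)).1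
  have hbua : b ∉ playerSet adj ua := by
    intro h
    have : b ∈ ({a} : Set V) := hPa ▸ ⟨h, Or.inr rfl⟩
    exact hab this.symm
  have haub : a ∉ playerSet adj ub := by
    intro h
    have : a ∈ ({b} : Set V) := hPb ▸ ⟨h, Or.inl rfl⟩
    exact hab this
  have haxr : Relation.ReflTransGen adj a x := haua.2.tail hua
  have hbxr : Relation.ReflTransGen adj b x := hbub.2.tail hub
  -- every vertex containing both a and b in its player set is reachable from x
  have hafter : ∀ m, a ∈ playerSet adj m → b ∈ playerSet adj m →
      Relation.ReflTransGen adj x m := by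
    intro m ham hbm
    rcases reach_comparable hT.out_unique haxr ham.2 with h | h
    · exact h
    · rcases h.cases_tail with rfl | ⟨u, hmu, hux⟩
      · exact Relation.ReflTransGen.refl
      exfalso
      have hau : Relation.ReflTransGen adj a u := ham.2.trans hmu
      have hbu : Relation.ReflTransGen adj b u := hbm.2.trans hmu
      have h1 : u = ua := by
        rcases reach_comparable hT.out_unique hau haua.2 with h | h
        · exact inpred_eq hT hux hua h
        · exact (inpred_eq hT hua hux h).symm
      exact hbua ⟨hb, h1 ▸ hbu⟩
  -- construct the two brackets
  set B0 := baseBracket adj hwf with hB0def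
  have hB0 := baseBracket_isBracket hwf
  set B := favBracket adj (favBracket adj B0 b) a with hBdef
  set B' := favBracket adj (favBracket adj B0 a) b with hB'def
  have hBbr : IsBracket adj B := favBracket_isBracket (favBracket_isBracket hB0 hb) ha
  have hB'br : IsBracket adj B' := favBracket_isBracket (favBracket_isBracket hB0 ha) hb
  have haPx : a ∈ playerSet adj x := ⟨ha, haxr⟩
  have hbPx : b ∈ playerSet adj x := ⟨hb, hbxr⟩
  have hBx : B x = a := by simp [hBdef, favBracket, haPx]
  have hB'x : B' x = b := by simp [hB'def, favBracket, hbPx]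
  have hBne : B ≠ B' := fun h => hab (by rw [← hBx, h, hB'x])
  have hagree : ∀ v, ¬(a ∈ playerSet adj v ∧ b ∈ playerSet adj v) → B v = B' v := by
    intro v hv
    by_cases hav : a ∈ playerSet adj v <;> by_cases hbv : b ∈ playerSet adj v
    · exact absurd ⟨hav, hbv⟩ hv
    · simp [hBdef, hB'def, favBracket, hav, hbv]
    · simp [hBdef, hB'def, favBracket, hav, hbv]
    · simp [hBdef, hB'def, favBracket, hav, hbv]
  have hkey : ∀ Bi ∈ 𝓑, ∀ m, (Bi m = B m ↔ Bi m = B' m) := by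
    intro Bi hBi m
    by_cases hboth : a ∈ playerSet adj m ∧ b ∈ playerSet adj m
    · have hBm : B m = a := by simp [hBdef, favBracket, hboth.1]
      have hB'm : B' m = b := by simp [hB'def, favBracket, hboth.2]
      have hxmr : Relation.ReflTransGen adj x m := hafter m hboth.1 hboth.2
      have hnota : Bi m ≠ a := by
        intro h
        have := bracket_const hT hwf (h𝓑 Bi hBi) m x (h ▸ haxr) hxmr
        exact (hmiss Bi hBi).1 (this.trans h)
      have hnotb : Bi m ≠ b := by
        intro h
        have := bracket_const hT hwf (h𝓑 Bi hBi) m x (h ▸ hbxr) hxmr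
        exact (hmiss Bi hBi).2 (this.trans h)
      rw [hBm, hB'm]
      exact ⟨fun h => absurd h hnota, fun h => absurd h hnotb⟩
    · rw [hagree m hboth]
  obtain ⟨Bi, hBi, hne'⟩ := hres B B' hBbr hB'br hBne
  apply hne'
  unfold score
  have : {m | IsMatch adj m ∧ Bi m = B m} = {m | IsMatch adj m ∧ Bi m = B' m} := by
    ext m
    exact and_congr_right fun _ => hkey Bi hBi m
  rw [this]

end SETour
end

section
/- Let T be a single-elimination tournament, a, b distinct players, and u, x vertices of T. If a, b ∈ P(u) ∩ P(x) and there exist in-neighbors u_a, u_b of x with P(u_a) ∩ {a,b} = {a} and P(u_b) ∩ {a,b} = {b}, then there exists a directed walk from x to u. -/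
namespace SETour

variable {V : Type*}

lemma comparable_of_out_unique {adj : V → V → Prop}
    (hout : ∀ ⦃v w w'⦄, adj v w → adj v w' → w = w')
    {a u x : V} (h1 : Relation.ReflTransGen adj a u)
    (h2 : Relation.ReflTransGen adj a x) :
    Relation.ReflTransGen adj u x ∨ Relation.ReflTransGen adj x u := by
  induction h1 using Relation.ReflTransGen.head_induction_on generalizing x with
  | refl => exact Or.inl h2
  | head hac hcu ih =>
    rcases h2.cases_head with rfl | ⟨w, haw, hwx⟩
    · exact Or.inr (Relation.ReflTransGen.head hac hcu)
    · exact ih (hout hac haw ▸ hwx)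

lemma pred_unique {adj : V → V → Prop} (hT : IsSETournament adj) {a w w' x : V}
    (h1 : Relation.ReflTransGen adj a w) (hw : adj w x)
    (h2 : Relation.ReflTransGen adj a w') (hw' : adj w' x) : w = w' := by
  rcases comparable_of_out_unique hT.out_unique h1 h2 with h | h
  · rcases h.cases_head with rfl | ⟨c, hwc, hcw'⟩
    · rfl
    · exact ((hT.acyclic x) (Relation.TransGen.tail'
        ((hT.out_unique hwc hw) ▸ hcw') hw')).elim
  · rcases h.cases_head with rfl | ⟨c, hwc, hcw'⟩
    · rfl
    · exact ((hT.acyclic x) (Relation.TransGen.tail'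
        ((hT.out_unique hwc hw') ▸ hcw') hw)).elim

/-- If `a, b ∈ P(u) ∩ P(x)` and `x` has in-neighbors separating
`a` from `b`, then there is a directed walk from `x` to `u`. -/
theorem statement_11 {V : Type*} [Finite V] (adj : V → V → Prop)
    (hT : IsSETournament adj)
    (a b : V) (ha : IsPlayer adj a) (hb : IsPlayer adj b) (hab : a ≠ b)
    (u x : V)
    (hau : a ∈ playerSet adj u) (hbu : b ∈ playerSet adj u)
    (hax : a ∈ playerSet adj x) (hbx : b ∈ playerSet adj x)
    (hx : IsPairMatch adj a b x) :
    Relation.ReflTransGen adj x u := by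
  obtain ⟨ua, ub, huax, hubx, hPa, hPb⟩ := hx
  have haua : Relation.ReflTransGen adj a ua := by
    have : a ∈ playerSet adj ua ∩ {a, b} := by rw [hPa]; exact rfl
    exact this.1.2
  have hbub : Relation.ReflTransGen adj b ub := by
    have : b ∈ playerSet adj ub ∩ {a, b} := by rw [hPb]; exact rfl
    exact this.1.2
  rcases comparable_of_out_unique hT.out_unique hau.2 hax.2 with h | h
  swap
  · exact h
  rcases h.cases_head with rfl | ⟨c, huc, hcx⟩
  · exact Relation.ReflTransGen.refl
  -- u ≠ x case: u →* x nontrivially; find predecessor of x on the path from u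
  rcases hcx.cases_tail with rfl | ⟨w, hcw, hwx⟩
  · -- c = x, so adj u x; u is a predecessor of x reachable from a and b
    have h1 : u = ua := pred_unique hT hau.2 huc haua huax
    have h2 : u = ub := pred_unique hT hbu.2 huc hbub hubx
    exfalso
    have : a ∈ playerSet adj ub ∩ {a, b} :=
      ⟨(h1 ▸ h2 : ua = ub) ▸ ⟨ha, haua⟩, Or.inl rfl⟩
    rw [hPb] at this
    exact hab this
  · have hawx : Relation.ReflTransGen adj a w :=
      (hau.2.trans (Relation.ReflTransGen.head huc hcw))
    have hbwx : Relation.ReflTransGen adj b w :=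
      (hbu.2.trans (Relation.ReflTransGen.head huc hcw))
    have h1 : w = ua := pred_unique hT hawx hwx haua huax
    have h2 : w = ub := pred_unique hT hbwx hwx hbub hubx
    exfalso
    have : a ∈ playerSet adj ub ∩ {a, b} :=
      ⟨(h1 ▸ h2 : ua = ub) ▸ ⟨ha, haua⟩, Or.inl rfl⟩
    rw [hPb] at this
    exact hab this

end SETour
end

section
/- Let T be a single-elimination tournament. If B̂ is a bracket of T and a is a player, then the function B̂_a defined by B̂_a(u) = a whenever a ∈ P(u) and B̂_a(u) = B̂(u) otherwise is also a bracket of T. -/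
namespace SETour

variable {V : Type*}

/-- Modifying a bracket so that a given player wins every match it
can yields a bracket. -/
theorem statement_14 {V : Type*} [Finite V] (adj : V → V → Prop)
    (hT : IsSETournament adj) (B : V → V) (hB : IsBracket adj B)
    (a : V) (ha : IsPlayer adj a) :
    IsBracket adj (favBracket adj B a) := by
  classical
  constructor
  · intro v
    unfold favBracket
    split
    · exact ha
    · exact hB.toPlayer v
  · intro p hp
    unfold favBracket
    split
    · rename_i h
      rcases h with ⟨_, hw⟩
      cases hw.cases_tail with
      | inl h => exact h.symm
      | inr h => exact absurd h.choose_spec.2 (hp _)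
    · exact hB.player_fix p hp
  · intro x hx
    by_cases hax : a ∈ playerSet adj x
    · have hne : a ≠ x := fun h => hx (h ▸ ha)
      have := hax.2
      have htg := (Relation.reflTransGen_iff_eq_or_transGen.mp this).resolve_left
          (fun h => hne h.symm)
      rcases Relation.TransGen.tail'_iff.mp htg with ⟨u, hu, hux⟩
      refine ⟨u, hux, ?_⟩
      have hau : a ∈ playerSet adj u := ⟨ha, hu⟩
      simp [favBracket, hax, hau]
    · rcases hB.match_pred x hx with ⟨u, hux, hBu⟩
      refine ⟨u, hux, ?_⟩
      have hau : a ∉ playerSet adj u := fun ⟨h1, h2⟩ => hax ⟨h1, h2.tail hux⟩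
      simp [favBracket, hax, hau, hBu]

end SETour
end
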